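/- Finite Model Property: if the L≻-formula φ is not a theorem of LCR, then there exists a Kripke LCR model with finitely many worlds containing a world x such that v_x(φ) ≠ 1. -/

import Mathlib

namespace LCR

/-- Łukasiewicz negation on ℝ. -/
noncomputable def lneg (a : ℝ) : ℝ := 1 - a

/-- Łukasiewicz implication on ℝ. -/
noncomputable def limp (a b : ℝ) : ℝ := min 1 (1 - a + b)

/-- Łukasiewicz strong conjunction ⊙ on ℝ. -/
noncomputable def lodot (a b : ℝ) : ℝ := max 0 (a + b - 1)

/-- The truth-value set T = {0, 1/(m−1), …, 1}. -/
def Tset (m : ℕ) : Set ℝ := {a | ∃ i : Fin m, a = (i : ℝ) / ((m : ℝ) - 1)}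

/-- The k-th truth value k/(m−1). -/
noncomputable def tv (m : ℕ) (k : Fin m) : ℝ := (k : ℝ) / ((m : ℝ) - 1)

/-- Formulas of the language L≻. -/
inductive Formula : Type where
  | var  : ℕ → Formula
  | neg  : Formula → Formula
  | imp  : Formula → Formula → Formula
  | cond : Formula → Formula → Formula
deriving DecidableEq

namespace Formula
/-- φ ∨ ψ := (φ → ψ) → ψ. -/
def or (φ ψ : Formula) : Formula := .imp (.imp φ ψ) ψ
/-- φ ∧ ψ := ¬(¬φ ∨ ¬ψ). -/
def and (φ ψ : Formula) : Formula := .neg (Formula.or (.neg φ) (.neg ψ))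
/-- φ ↔ ψ := (φ → ψ) ∧ (ψ → φ). -/
def iff (φ ψ : Formula) : Formula := Formula.and (.imp φ ψ) (.imp ψ φ)
end Formula

/-- Purely propositional (¬,→)-formulas. -/
inductive PForm : Type where
  | var : ℕ → PForm
  | neg : PForm → PForm
  | imp : PForm → PForm → PForm

/-- Evaluation of a propositional formula under an assignment. -/
noncomputable def PForm.eval (σ : ℕ → ℝ) : PForm → ℝ
  | .var n => σ n
  | .neg φ => lneg (PForm.eval σ φ)
  | .imp φ ψ => limp (PForm.eval σ φ) (PForm.eval σ ψ)

/-- Tautology of Łukasiewicz m-valued propositional logic. -/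
def PForm.Taut (m : ℕ) (φ : PForm) : Prop :=
  ∀ σ : ℕ → ℝ, (∀ n, σ n ∈ Tset m) → PForm.eval σ φ = 1

/-- Substitution of L≻-formulas for the variables of a propositional formula. -/
def PForm.subst (σ : ℕ → Formula) : PForm → Formula
  | .var n => σ n
  | .neg φ => .neg (PForm.subst σ φ)
  | .imp φ ψ => .imp (PForm.subst σ φ) (PForm.subst σ ψ)

/-- `J` is a family of Rosser–Turquette J-operators: each `J a` is obtained by substitution
into a (¬,→)-definable one-place connective whose value is 1 at inputs equal to `tv m a`
and 0 at all other truth values. -/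
def IsJFamily (m : ℕ) (J : Fin m → Formula → Formula) : Prop :=
  ∃ P : Fin m → PForm,
    (∀ a φ, J a φ = PForm.subst (fun _ => φ) (P a)) ∧
    (∀ (a : Fin m) (σ : ℕ → ℝ), (∀ n, σ n ∈ Tset m) →
      PForm.eval σ (P a) = if σ 0 = tv m a then 1 else 0)

/-- `I` is a family of threshold operators: each `I a` is obtained by substitution into a
(¬,→)-definable one-place connective whose value is 1 at inputs ≥ `tv m a` and 0 otherwise. -/
def IsIFamily (m : ℕ) (I : Fin m → Formula → Formula) : Prop :=
  ∃ P : Fin m → PForm,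
    (∀ a φ, I a φ = PForm.subst (fun _ => φ) (P a)) ∧
    (∀ (a : Fin m) (σ : ℕ → ℝ), (∀ n, σ n ∈ Tset m) →
      PForm.eval σ (P a) = if tv m a ≤ σ 0 then 1 else 0)

/-- The index of aᵢ = (m−i)/(m−1) for i = j+1, i.e. m−1−j. -/
def revIdx {m : ℕ} (j : Fin m) : Fin m := ⟨m - 1 - j.1, by have := j.isLt; omega⟩

/-- Index-level strong conjunction: tv (odotIdx a b) = tv a ⊙ tv b. -/
def odotIdx {m : ℕ} (a b : Fin m) : Fin m :=
  ⟨a.1 + b.1 - (m - 1), by have := a.isLt; have := b.isLt; omega⟩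

/-- Nested implication →ⁿᵢ₌₁(φᵢ, ψ) = φₙ → (φₙ₋₁ → (⋯ → (φ₁ → ψ))), with φᵢ = f (i−1). -/
def nestImp : (n : ℕ) → (Fin n → Formula) → Formula → Formula
  | 0, _, ψ => ψ
  | n+1, f, ψ => .imp (f (Fin.last n)) (nestImp n (fun i => f i.castSucc) ψ)

/-- Theorems of the system LCR (relative to the I-operators used in the rules R_a). -/
inductive Thm (m : ℕ) (I : Fin m → Formula → Formula) : Formula → Prop where
  | taut : ∀ (ψ : PForm) (σ : ℕ → Formula), PForm.Taut m ψ → Thm m I (PForm.subst σ ψ)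
  | a1 : ∀ φ ψ θ : Formula,
      Thm m I (.imp (.cond φ (ψ.and θ)) ((Formula.cond φ ψ).and (.cond φ θ)))
  | a2 : ∀ φ ψ θ : Formula,
      Thm m I (.imp ((Formula.cond φ ψ).and (.cond φ θ)) (.cond φ (ψ.and θ)))
  | a3 : ∀ (φ : Formula) (p : ℕ), Thm m I (.cond φ (.imp (.var p) (.var p)))
  | mp : ∀ φ ψ : Formula, Thm m I (.imp φ ψ) → Thm m I φ → Thm m I ψ
  | rcea : ∀ φ ψ θ : Formula,
      Thm m I (φ.iff ψ) → Thm m I ((Formula.cond φ θ).iff (.cond ψ θ))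
  | rcec : ∀ φ ψ θ : Formula,
      Thm m I (φ.iff ψ) → Thm m I ((Formula.cond θ φ).iff (.cond θ ψ))
  | ra : ∀ (a : Fin m) (φ : Formula) (γ : Fin m → Formula) (δ : Formula),
      (∀ b : Fin m,
        Thm m I (nestImp m (fun j => I (odotIdx (revIdx j) b) (γ j)) (I (odotIdx a b) δ))) →
      Thm m I (nestImp m (fun j => I (revIdx j) (.cond φ (γ j))) (I a (.cond φ δ)))

/-- Γ ⊢_LCR φ : derivability from Γ by theorems of LCR and modus ponens. -/
inductive Deriv (m : ℕ) (I : Fin m → Formula → Formula) (Γ : Set Formula) : Formula → Prop where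
  | thm : ∀ φ, Thm m I φ → Deriv m I Γ φ
  | mem : ∀ φ, φ ∈ Γ → Deriv m I Γ φ
  | mp : ∀ φ ψ, Deriv m I Γ (.imp φ ψ) → Deriv m I Γ φ → Deriv m I Γ ψ

/-- A Kripke LCR model over a set of worlds W. -/
structure Model (m : ℕ) (W : Type) : Type where
  ne : Nonempty W
  R : (Fin m → Set W) → W → W → ℝ
  R_mem : ∀ X x y, R X x y ∈ Tset m
  v : ℕ → W → ℝ
  v_mem : ∀ p x, v p x ∈ Tset m

/-- Valuation of formulas in a Kripke LCR model. -/
noncomputable def Model.val {m : ℕ} {W : Type} (M : Model m W) : Formula → W → ℝ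
  | .var p, x => M.v p x
  | .neg φ, x => lneg (M.val φ x)
  | .imp φ ψ, x => limp (M.val φ x) (M.val ψ x)
  | .cond φ ψ, x =>
      sInf (Set.range fun y : W =>
        limp (M.R (fun i => {z : W | M.val φ z = tv m i}) x y) (M.val ψ y))

/-- Semantic consequence Γ ⊨ φ over all Kripke LCR models. -/
def Entails (m : ℕ) (Γ : Set Formula) (φ : Formula) : Prop :=
  ∀ (W : Type) (M : Model m W) (x : W), (∀ ψ ∈ Γ, M.val ψ x = 1) → M.val φ x = 1

/-- Syntactic consistency. -/
def Consistent (m : ℕ) (I : Fin m → Formula → Formula) (Γ : Set Formula) : Prop :=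
  ¬ ∃ φ : Formula, Deriv m I Γ φ ∧ Deriv m I Γ (.neg φ)

/-- Maximal consistency. -/
def MaxConsistent (m : ℕ) (I : Fin m → Formula → Formula) (Γ : Set Formula) : Prop :=
  Consistent m I Γ ∧ ∀ φ : Formula, Deriv m I Γ φ → φ ∈ Γ

section Basics
variable {m : ℕ}

lemma em1 (hm : 2 ≤ m) : (0:ℝ) < (m:ℝ) - 1 := by
  have : (2:ℝ) ≤ (m:ℝ) := by exact_mod_cast hm
  linarith

lemma tv_mem (k : Fin m) : tv m k ∈ Tset m := ⟨k, rfl⟩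

lemma mem_tset_iff {a : ℝ} : a ∈ Tset m ↔ ∃ k : Fin m, a = tv m k := Iff.rfl

lemma natcast_sub_one (hm : 2 ≤ m) : ((m - 1 : ℕ) : ℝ) = (m:ℝ) - 1 := by
  have h1 : 1 ≤ m := by omega
  push_cast [h1]; ring

lemma tv_le_tv (hm : 2 ≤ m) {a b : Fin m} : tv m a ≤ tv m b ↔ a.1 ≤ b.1 := by
  unfold tv
  rw [div_le_div_iff_of_pos_right (em1 hm)]
  exact_mod_cast Iff.rfl

lemma tv_lt_tv (hm : 2 ≤ m) {a b : Fin m} : tv m a < tv m b ↔ a.1 < b.1 := by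
  unfold tv
  rw [div_lt_div_iff_of_pos_right (em1 hm)]
  exact_mod_cast Iff.rfl

lemma tv_inj (hm : 2 ≤ m) {a b : Fin m} (h : tv m a = tv m b) : a = b := by
  apply Fin.ext
  have h2 : (a.1 : ℝ) = b.1 := by
    unfold tv at h
    have := (em1 (m := m) hm).ne'
    field_simp at h
    exact_mod_cast h
  exact_mod_cast h2

lemma tv_nonneg (hm : 2 ≤ m) (k : Fin m) : 0 ≤ tv m k :=
  div_nonneg (by positivity) (le_of_lt (em1 hm))

lemma tv_le_coe (hm : 2 ≤ m) (k : Fin m) : (k.1 : ℝ) ≤ (m:ℝ) - 1 := by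
  have h1 : k.1 ≤ m - 1 := by have := k.isLt; omega
  calc (k.1:ℝ) ≤ ((m-1:ℕ):ℝ) := by exact_mod_cast h1
  _ = (m:ℝ) - 1 := natcast_sub_one hm

lemma tv_le_one (hm : 2 ≤ m) (k : Fin m) : tv m k ≤ 1 := by
  rw [tv, div_le_one (em1 hm)]
  exact tv_le_coe hm k

lemma tv_last (hm : 2 ≤ m) : tv m ⟨m - 1, by omega⟩ = 1 := by
  show ((m-1:ℕ):ℝ) / ((m:ℝ)-1) = 1
  rw [natcast_sub_one hm, div_self (em1 hm).ne']

lemma tset_bounds (hm : 2 ≤ m) {a : ℝ} (h : a ∈ Tset m) : 0 ≤ a ∧ a ≤ 1 := by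
  obtain ⟨k, rfl⟩ := h
  exact ⟨tv_nonneg hm k, tv_le_one hm k⟩

lemma tv_eq_one_iff (hm : 2 ≤ m) {k : Fin m} : tv m k = 1 ↔ k.1 = m - 1 := by
  constructor
  · intro h
    have := tv_inj hm (h.trans (tv_last hm).symm)
    simpa using congrArg Fin.val this
  · intro h
    have : k = ⟨m-1, by omega⟩ := Fin.ext h
    rw [this]; exact tv_last hm

lemma cast_fin_sub (hm : 2 ≤ m) (k : Fin m) : ((m - 1 - k.1 : ℕ) : ℝ) = (m:ℝ) - 1 - k.1 := by
  have h1 : (m - 1 - k.1) + k.1 = m - 1 := by have := k.isLt; omega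
  have h2 := congrArg (fun n : ℕ => (n : ℝ)) h1
  push_cast at h2
  rw [natcast_sub_one hm] at h2
  linarith

lemma tv_lneg (hm : 2 ≤ m) (k : Fin m) : lneg (tv m k) = tv m (revIdx k) := by
  show 1 - (k.1:ℝ)/((m:ℝ)-1) = ((m - 1 - k.1 : ℕ):ℝ)/((m:ℝ)-1)
  rw [cast_fin_sub hm, eq_div_iff (em1 hm).ne', sub_mul, one_mul,
    div_mul_cancel₀ _ (em1 hm).ne']

/-- index-level implication -/
def impI (a b : Fin m) : Fin m := ⟨m - 1 - (a.1 - b.1), by have := a.isLt; omega⟩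

lemma cast_msub (hm : 2 ≤ m) {n : ℕ} (hn : n ≤ m - 1) :
    ((m - 1 - n : ℕ) : ℝ) = (m:ℝ) - 1 - n := by
  have h1 : (m - 1 - n) + n = m - 1 := by omega
  have h2 := congrArg (fun j : ℕ => (j : ℝ)) h1
  push_cast at h2
  rw [natcast_sub_one hm] at h2
  linarith

lemma tv_limp (hm : 2 ≤ m) (a b : Fin m) : limp (tv m a) (tv m b) = tv m (impI a b) := by
  have ha := a.isLt; have hb := b.isLt
  have hM := em1 (m := m) hm
  rcases le_or_gt a.1 b.1 with h | h
  · have h1 : tv m a ≤ tv m b := (tv_le_tv hm).2 h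
    have hL : limp (tv m a) (tv m b) = 1 := min_eq_left (by linarith)
    have hR : tv m (impI a b) = 1 := by
      rw [tv_eq_one_iff hm]
      show m - 1 - (a.1 - b.1) = m - 1
      omega
    rw [hL, hR]
  · have hsub : ((a.1 - b.1 : ℕ) : ℝ) = (a.1:ℝ) - b.1 := by
      have : b.1 ≤ a.1 := le_of_lt h
      push_cast [this]; ring
    have hc : ((m - 1 - (a.1 - b.1) : ℕ) : ℝ) = (m:ℝ) - 1 - ((a.1:ℝ) - b.1) := by
      rw [cast_msub hm (by omega), hsub]
    show min 1 (1 - (a.1:ℝ)/((m:ℝ)-1) + (b.1:ℝ)/((m:ℝ)-1))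
        = ((m - 1 - (a.1 - b.1) : ℕ) : ℝ)/((m:ℝ)-1)
    rw [hc]
    have hab : (b.1:ℝ) ≤ (a.1:ℝ) := by exact_mod_cast le_of_lt h
    have key : 1 - (a.1:ℝ)/((m:ℝ)-1) + (b.1:ℝ)/((m:ℝ)-1)
        = ((m:ℝ) - 1 - ((a.1:ℝ) - b.1))/((m:ℝ)-1) := by
      field_simp
      ring
    rw [key]
    apply min_eq_right
    rw [div_le_one hM]
    linarith

lemma tv_lodot (hm : 2 ≤ m) (a b : Fin m) : lodot (tv m a) (tv m b) = tv m (odotIdx a b) := by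
  have ha := a.isLt; have hb := b.isLt
  have hM := em1 (m := m) hm
  show max 0 ((a.1:ℝ)/((m:ℝ)-1) + (b.1:ℝ)/((m:ℝ)-1) - 1)
      = ((a.1 + b.1 - (m-1) : ℕ):ℝ)/((m:ℝ)-1)
  have key : (a.1:ℝ)/((m:ℝ)-1) + (b.1:ℝ)/((m:ℝ)-1) - 1
      = ((a.1:ℝ) + b.1 - ((m:ℝ)-1))/((m:ℝ)-1) := by field_simp
  rw [key]
  rcases le_or_gt (a.1 + b.1) (m - 1) with h | h
  · have h0 : a.1 + b.1 - (m-1) = 0 := by omega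
    rw [h0]
    have hle : ((a.1:ℝ) + b.1 - ((m:ℝ)-1))/((m:ℝ)-1) ≤ 0 := by
      apply div_nonpos_of_nonpos_of_nonneg _ (le_of_lt hM)
      have : ((a.1 + b.1:ℕ):ℝ) ≤ ((m-1:ℕ):ℝ) := by exact_mod_cast h
      rw [natcast_sub_one hm] at this
      push_cast at this
      linarith
    simp only [Nat.cast_zero, zero_div]
    exact max_eq_left hle
  · have hcast : ((a.1 + b.1 - (m-1) : ℕ):ℝ) = (a.1:ℝ) + b.1 - ((m:ℝ)-1) := by
      have h1 : (a.1 + b.1 - (m-1)) + (m-1) = a.1 + b.1 := by omega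
      have h2 := congrArg (fun j : ℕ => (j:ℝ)) h1
      push_cast at h2
      rw [natcast_sub_one hm] at h2
      linarith
    rw [hcast]
    apply max_eq_right
    apply div_nonneg _ (le_of_lt hM)
    have : ((m-1:ℕ):ℝ) ≤ ((a.1+b.1:ℕ):ℝ) := by exact_mod_cast le_of_lt h
    rw [natcast_sub_one hm] at this
    push_cast at this
    linarith

end Basics
section Limp
variable {m : ℕ}

lemma limp_le_one (a b : ℝ) : limp a b ≤ 1 := min_le_left _ _

lemma limp_eq_one_iff {a b : ℝ} : limp a b = 1 ↔ a ≤ b := by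
  unfold limp
  constructor
  · intro h
    by_contra hab
    push_neg at hab
    have : min 1 (1 - a + b) ≤ 1 - a + b := min_le_right _ _
    rw [h] at this
    linarith
  · intro h
    exact min_eq_left (by linarith)

lemma limp_one_left {b : ℝ} (hb : b ≤ 1) : limp 1 b = b := by
  unfold limp
  rw [min_eq_right] <;> linarith

lemma limp_zero_left {b : ℝ} (hb : 0 ≤ b) : limp 0 b = 1 := by
  unfold limp
  rw [min_eq_left] <;> linarith

lemma limp_anti {a a' b : ℝ} (h : a' ≤ a) : limp a b ≤ limp a' b := by
  unfold limp
  apply min_le_min le_rfl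
  linarith

lemma limp_limp_ge {a b : ℝ} (ha : a ≤ 1) : a ≤ limp (limp a b) b := by
  unfold limp
  have h1 : min 1 (1 - a + b) ≤ 1 - a + b := min_le_right _ _
  have : a ≤ 1 - min 1 (1 - a + b) + b := by linarith
  exact le_min ha this

lemma le_limp_of_lodot {a b d : ℝ} (hb : b ≤ 1) (h : lodot a b ≤ d) : b ≤ limp a d := by
  unfold lodot at h
  unfold limp
  have h1 : a + b - 1 ≤ d := le_trans (le_max_right _ _) h
  exact le_min hb (by linarith)

lemma limp_ge_imp {r c t : ℝ} (h : t ≤ limp r c) : t + r - 1 ≤ c := by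
  unfold limp at h
  have := le_trans h (min_le_right _ _)
  linarith

lemma lneg_mem_tset (hm : 2 ≤ m) {a : ℝ} (h : a ∈ Tset m) : lneg a ∈ Tset m := by
  obtain ⟨k, rfl⟩ := h
  exact ⟨revIdx k, tv_lneg hm k⟩

lemma limp_mem_tset (hm : 2 ≤ m) {a b : ℝ} (ha : a ∈ Tset m) (hb : b ∈ Tset m) :
    limp a b ∈ Tset m := by
  obtain ⟨j, rfl⟩ := ha; obtain ⟨k, rfl⟩ := hb
  exact ⟨impI j k, tv_limp hm j k⟩

lemma min_mem_tset {a b : ℝ} (ha : a ∈ Tset m) (hb : b ∈ Tset m) : min a b ∈ Tset m := by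
  rcases le_total a b with h | h
  · rwa [min_eq_left h]
  · rwa [min_eq_right h]

lemma one_mem_tset (hm : 2 ≤ m) : (1:ℝ) ∈ Tset m := ⟨⟨m-1, by omega⟩, (tv_last hm).symm⟩

/-- next value up -/
lemma tset_succ (hm : 2 ≤ m) {a : ℝ} (ha : a ∈ Tset m) {k : Fin m} (h : tv m k < a)
    (hk : k.1 + 1 < m) : tv m ⟨k.1+1, hk⟩ ≤ a := by
  obtain ⟨j, rfl⟩ := ha
  have := (tv_lt_tv hm).1 h
  exact (tv_le_tv hm).2 (by simpa using this)

end Limp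

section Worlds
variable {m : ℕ} {I : Fin m → Formula → Formula}

/-- A "world": a T-valued valuation of all formulas that is a Łukasiewicz homomorphism
on ¬,→ and satisfies all theorems of LCR. -/
structure Wld (m : ℕ) (I : Fin m → Formula → Formula) : Type where
  w : Formula → ℝ
  mem : ∀ χ, w χ ∈ Tset m
  hneg : ∀ χ, w (.neg χ) = lneg (w χ)
  himp : ∀ χ ψ, w (.imp χ ψ) = limp (w χ) (w ψ)
  hthm : ∀ θ, Thm m I θ → w θ = 1

variable (u : Wld m I)

lemma Wld.nonneg (hm : 2 ≤ m) (χ : Formula) : 0 ≤ u.w χ := (tset_bounds hm (u.mem χ)).1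

lemma Wld.le_one (hm : 2 ≤ m) (χ : Formula) : u.w χ ≤ 1 := (tset_bounds hm (u.mem χ)).2

lemma Wld.imp_one_iff (A B : Formula) : u.w (.imp A B) = 1 ↔ u.w A ≤ u.w B := by
  rw [u.himp]; exact limp_eq_one_iff

lemma Wld.or_val (hm : 2 ≤ m) (A B : Formula) : u.w (Formula.or A B) = max (u.w A) (u.w B) := by
  show u.w (.imp (.imp A B) B) = _
  rw [u.himp, u.himp]
  rcases le_total (u.w A) (u.w B) with h | h
  · rw [limp_eq_one_iff.2 h, limp_one_left (u.le_one hm B), max_eq_right h]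
  · have h1 : limp (u.w A) (u.w B) = 1 - u.w A + u.w B :=
      min_eq_right (by linarith)
    rw [h1, max_eq_left h]
    unfold limp
    rw [min_eq_right]
    · ring
    · have := u.le_one hm A; linarith

lemma Wld.and_val (hm : 2 ≤ m) (A B : Formula) : u.w (Formula.and A B) = min (u.w A) (u.w B) := by
  show u.w (.neg (Formula.or (.neg A) (.neg B))) = _
  rw [u.hneg, u.or_val hm, u.hneg, u.hneg]
  unfold lneg
  rcases le_total (u.w A) (u.w B) with h | h
  · rw [max_eq_left (by linarith), min_eq_left h]; ring
  · rw [max_eq_right (by linarith), min_eq_right h]; ring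

lemma Wld.iff_one_iff (hm : 2 ≤ m) (A B : Formula) : u.w (Formula.iff A B) = 1 ↔ u.w A = u.w B := by
  show u.w (Formula.and (.imp A B) (.imp B A)) = 1 ↔ _
  rw [u.and_val hm]
  constructor
  · intro h
    have hx : (1:ℝ) ≤ u.w (.imp A B) := h ▸ min_le_left _ _
    have hy : (1:ℝ) ≤ u.w (.imp B A) := h ▸ min_le_right _ _
    have h1 : u.w (.imp A B) = 1 := le_antisymm (u.le_one hm _) hx
    have h2 : u.w (.imp B A) = 1 := le_antisymm (u.le_one hm _) hy
    exact le_antisymm ((u.imp_one_iff A B).1 h1) ((u.imp_one_iff B A).1 h2)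
  · intro h
    rw [(u.imp_one_iff A B).2 (le_of_eq h), (u.imp_one_iff B A).2 (le_of_eq h.symm)]
    simp

lemma Wld.subst_val (σ : ℕ → Formula) (ψ : PForm) :
    u.w (PForm.subst σ ψ) = PForm.eval (fun n => u.w (σ n)) ψ := by
  induction ψ with
  | var n => rfl
  | neg φ ih => show u.w (.neg _) = _; rw [u.hneg, ih]; rfl
  | imp φ ψ ih1 ih2 => show u.w (.imp _ _) = _; rw [u.himp, ih1, ih2]; rfl

lemma Wld.I_val (hI : IsIFamily m I) (a : Fin m) (χ : Formula) :
    u.w (I a χ) = if tv m a ≤ u.w χ then 1 else 0 := by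
  obtain ⟨P, hPdef, hPval⟩ := hI
  rw [hPdef, u.subst_val]
  exact hPval a _ (fun n => u.mem χ)

lemma Wld.nestImp_one_iff (hm : 2 ≤ m) (n : ℕ) (A : Fin n → Formula) (B : Formula)
    (hA : ∀ j, u.w (A j) = 0 ∨ u.w (A j) = 1) :
    (u.w (nestImp n A B) = 1 ↔ ((∀ j, u.w (A j) = 1) → u.w B = 1)) := by
  induction n with
  | zero => simp [nestImp]
  | succ n ih =>
    show u.w (.imp (A (Fin.last n)) (nestImp n (fun i => A i.castSucc) B)) = 1 ↔ _
    rw [u.himp]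
    rcases hA (Fin.last n) with h | h
    · rw [h, limp_zero_left (u.nonneg hm _)]
      constructor
      · intro _ hall
        exact absurd (hall (Fin.last n)) (by rw [h]; norm_num)
      · intro _; rfl
    · rw [h, limp_one_left (u.le_one hm _)]
      rw [ih (fun i => A i.castSucc) (fun j => hA j.castSucc)]
      constructor
      · intro hh hall
        exact hh (fun j => hall j.castSucc)
      · intro hh hall
        apply hh
        intro j
        rcases Fin.eq_castSucc_or_eq_last j with ⟨i, rfl⟩ | rfl
        · exact hall i
        · exact h
end Worlds
section Abstraction

/-- Injective encoding of formulas into ℕ. -/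
def enc : Formula → ℕ
  | .var n => Nat.pair 0 n
  | .neg a => Nat.pair 1 (enc a)
  | .imp a b => Nat.pair 2 (Nat.pair (enc a) (enc b))
  | .cond a b => Nat.pair 3 (Nat.pair (enc a) (enc b))

lemma enc_inj : ∀ a b : Formula, enc a = enc b → a = b := by
  intro a
  induction a with
  | var n =>
    intro b hb; cases b <;> simp only [enc, Nat.pair_eq_pair, true_and] at hb
    · rw [hb]
    · exact absurd hb.1 (by norm_num)
    · exact absurd hb.1 (by norm_num)
    · exact absurd hb.1 (by norm_num)
  | neg a ih =>
    intro b hb; cases b <;> simp only [enc, Nat.pair_eq_pair, true_and] at hb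
    · exact absurd hb.1 (by norm_num)
    · rw [ih _ hb]
    · exact absurd hb.1 (by norm_num)
    · exact absurd hb.1 (by norm_num)
  | imp a b ih1 ih2 =>
    intro c hc; cases c <;> simp only [enc, Nat.pair_eq_pair, true_and] at hc
    · exact absurd hc.1 (by norm_num)
    · exact absurd hc.1 (by norm_num)
    · rw [ih1 _ hc.1, ih2 _ hc.2]
    · exact absurd hc.1 (by norm_num)
  | cond a b ih1 ih2 =>
    intro c hc; cases c <;> simp only [enc, Nat.pair_eq_pair, true_and] at hc
    · exact absurd hc.1 (by norm_num)
    · exact absurd hc.1 (by norm_num)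
    · exact absurd hc.1 (by norm_num)
    · rw [ih1 _ hc.1, ih2 _ hc.2]

open Classical in
noncomputable def sigF (n : ℕ) : Formula :=
  if h : ∃ F : Formula, enc F = n then h.choose else .var 0

lemma sigF_enc (F : Formula) : sigF (enc F) = F := by
  unfold sigF
  rw [dif_pos ⟨F, rfl⟩]
  exact enc_inj _ _ (Exists.choose_spec (⟨F, rfl⟩ : ∃ G : Formula, enc G = enc F))

/-- Propositional abstraction of a formula: conditionals become atoms. -/
def abst : Formula → PForm
  | .var n => .var (enc (.var n))
  | .neg a => .neg (abst a)
  | .imp a b => .imp (abst a) (abst b)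
  | .cond a b => .var (enc (.cond a b))

lemma subst_abst (F : Formula) : PForm.subst sigF (abst F) = F := by
  induction F with
  | var n => exact sigF_enc _
  | neg a ih => show Formula.neg _ = _; rw [show PForm.subst sigF (abst a) = a from ih]
  | imp a b ih1 ih2 => show Formula.imp _ _ = _; rw [show PForm.subst sigF (abst a) = a from ih1, show PForm.subst sigF (abst b) = b from ih2]
  | cond a b ih1 ih2 => exact sigF_enc _

end Abstraction

section Compactness
variable {m : ℕ} {I : Fin m → Formula → Formula}

/-- Index-level evaluation of a formula given an atom assignment. -/
def evI (σ : Formula → Fin m) : Formula → Fin m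
  | .var n => σ (.var n)
  | .neg a => revIdx (evI σ a)
  | .imp a b => impI (evI σ a) (evI σ b)
  | .cond a b => σ (.cond a b)

/-- Real-valued evaluation. -/
noncomputable def ev (σ : Formula → Fin m) (F : Formula) : ℝ := tv m (evI σ F)

lemma ev_neg (hm : 2 ≤ m) (σ : Formula → Fin m) (a : Formula) :
    ev σ (.neg a) = lneg (ev σ a) :=
  (tv_lneg hm (evI σ a)).symm

lemma ev_imp (hm : 2 ≤ m) (σ : Formula → Fin m) (a b : Formula) :
    ev σ (.imp a b) = limp (ev σ a) (ev σ b) :=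
  (tv_limp hm (evI σ a) (evI σ b)).symm

lemma continuous_evI (F : Formula) : Continuous fun σ : Formula → Fin m => evI σ F := by
  induction F with
  | var n => exact continuous_apply _
  | neg a ih =>
    exact (continuous_of_discreteTopology (f := revIdx (m := m))).comp ih
  | imp a b ih1 ih2 =>
    exact (continuous_of_discreteTopology
      (f := fun p : Fin m × Fin m => impI p.1 p.2)).comp (ih1.prodMk ih2)
  | cond a b ih1 ih2 => exact continuous_apply _

/-- Turn a satisfying atom assignment into a world. -/
noncomputable def Wld.ofSig (hm : 2 ≤ m) (σ : Formula → Fin m)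
    (hσ : ∀ θ, Thm m I θ → ev σ θ = 1) : Wld m I where
  w := ev σ
  mem := fun χ => tv_mem _
  hneg := fun χ => ev_neg hm σ χ
  himp := fun χ ψ => ev_imp hm σ χ ψ
  hthm := hσ

/-- Any world gives an atom assignment with the same evaluation. -/
lemma Wld.toSig (hm : 2 ≤ m) (u : Wld m I) :
    ∃ σ : Formula → Fin m, ∀ F, ev σ F = u.w F := by
  classical
  have hch : ∀ F : Formula, ∃ k : Fin m, u.w F = tv m k := fun F => u.mem F
  refine ⟨fun F => (hch F).choose, ?_⟩
  intro F
  induction F with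
  | var n => exact ((hch (.var n)).choose_spec).symm
  | neg a ih => rw [ev_neg hm, u.hneg, ih]
  | imp a b ih1 ih2 => rw [ev_imp hm, u.himp, ih1, ih2]
  | cond a b ih1 ih2 => exact ((hch (.cond a b)).choose_spec).symm

/-- Any Tset-valued propositional assignment yields a world-like valuation via `abst`. -/
noncomputable def sigOfTaut (σ' : ℕ → ℝ) (h : ∀ n, σ' n ∈ Tset m) : Formula → Fin m :=
  fun F => (h (enc F)).choose

lemma sigOfTaut_ev (hm : 2 ≤ m) (σ' : ℕ → ℝ) (h : ∀ n, σ' n ∈ Tset m) (F : Formula) :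
    ev (sigOfTaut σ' h) F = PForm.eval σ' (abst F) := by
  induction F with
  | var n =>
    show tv m (sigOfTaut σ' h (.var n)) = σ' (enc (.var n))
    exact ((h (enc (.var n))).choose_spec).symm
  | neg a ih => rw [ev_neg hm]; show lneg _ = lneg _; rw [ih]
  | imp a b ih1 ih2 => rw [ev_imp hm]; show limp _ _ = limp _ _; rw [ih1, ih2]
  | cond a b ih1 ih2 =>
    show tv m (sigOfTaut σ' h (.cond a b)) = σ' (enc (.cond a b))
    exact ((h (enc (.cond a b))).choose_spec).symm

/-- Iterated implication θ → (θ → ⋯ → (θ → ρ)). -/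
def iterImp (θ ρ : Formula) : ℕ → Formula
  | 0 => ρ
  | k+1 => .imp θ (iterImp θ ρ k)

lemma thm_iterImp (θ ρ : Formula) (k : ℕ) (h : Thm m I (iterImp θ ρ k))
    (hθ : Thm m I θ) : Thm m I ρ := by
  induction k with
  | zero => exact h
  | succ k ih => exact ih (Thm.mp _ _ h hθ)

/-- The chain formula θ₁ ⇒* (θ₂ ⇒* ⋯ ⇒* χ). -/
def chain (L : List Formula) (χ : Formula) (k : ℕ) : Formula :=
  L.foldr (fun θ ρ => iterImp θ ρ k) χ

lemma thm_chain (L : List Formula) (χ : Formula) (k : ℕ)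
    (h : Thm m I (chain L χ k)) (hL : ∀ θ ∈ L, Thm m I θ) : Thm m I χ := by
  induction L with
  | nil => exact h
  | cons θ L ih =>
    exact ih (thm_iterImp θ _ k h (hL θ (by simp))) (fun ρ hρ => hL ρ (by simp [hρ]))

/-- THE KEY LEMMA: anything true at every world is a theorem. -/
lemma comp (hm : 2 ≤ m) (χ : Formula) (hval : ∀ u : Wld m I, u.w χ = 1) :
    Thm m I χ := by
  classical
  -- the closed sets
  set C : Formula → Set (Formula → Fin m) :=
    fun θ => {σ | ev σ θ = 1} with hC
  have hclopen : ∀ θ, IsClosed (C θ) ∧ IsOpen (C θ) := by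
    intro θ
    have h1 : C θ = (fun σ => evI σ θ) ⁻¹' {k : Fin m | tv m k = 1} := rfl
    constructor
    · rw [h1]; exact (isClosed_discrete _).preimage (continuous_evI θ)
    · rw [h1]; exact (isOpen_discrete _).preimage (continuous_evI θ)
  -- compact complement
  have hcompl : IsCompact ((C χ)ᶜ) := ((hclopen χ).2.isClosed_compl).isCompact
  have hempty : (C χ)ᶜ ∩ ⋂ θ : {θ : Formula // Thm m I θ}, C θ.1 = ∅ := by
    ext σ
    simp only [Set.mem_inter_iff, Set.mem_iInter, Set.mem_empty_iff_false, iff_false]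
    rintro ⟨hσc, hσK⟩
    apply hσc
    exact hval (Wld.ofSig hm σ (fun θ hθ => hσK ⟨θ, hθ⟩))
  obtain ⟨t, ht⟩ := hcompl.elim_finite_subfamily_closed _
    (fun θ : {θ : Formula // Thm m I θ} => (hclopen θ.1).1) hempty
  -- finite list of theorems
  set L : List Formula := (t.toList.map Subtype.val) with hL
  have hLthm : ∀ θ ∈ L, Thm m I θ := by
    intro θ hθ
    rw [hL] at hθ
    obtain ⟨θ', _, rfl⟩ := List.mem_map.1 hθ
    exact θ'.2
  -- the chain is a tautology (after abstraction)
  have htaut : PForm.Taut m (abst (chain L χ (m-1))) := by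
    intro σ' hσ'
    rw [← sigOfTaut_ev hm σ' hσ']
    set σ'' := sigOfTaut (m := m) σ' hσ' with hσ''def
    have hKχ : (∀ θ ∈ L, ev σ'' θ = 1) → ev σ'' χ = 1 := by
      intro hall
      by_contra hne
      have hσin : σ'' ∈ (C χ)ᶜ ∩ ⋂ θ ∈ t, C (θ : {θ : Formula // Thm m I θ}).1 := by
        refine ⟨hne, ?_⟩
        simp only [Set.mem_iInter]
        intro θ hθ
        exact hall θ.1 (List.mem_map.2 ⟨θ, Finset.mem_toList.2 hθ, rfl⟩)
      rw [ht] at hσin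
      exact hσin
    -- evaluate the chain
    have main : ∀ (L' : List Formula),
        ((∀ θ ∈ L', ev σ'' θ = 1) → ev σ'' χ = 1) →
        ev σ'' (chain L' χ (m-1)) = 1 := by
      intro L'
      induction L' with
      | nil => intro hK; exact hK (by simp)
      | cons θ L' ih =>
        intro hK
        show ev σ'' (iterImp θ (chain L' χ (m-1)) (m-1)) = 1
        have hb0 := tset_bounds hm
          (show ev σ'' (chain L' χ (m-1)) ∈ Tset m from tv_mem _)
        rcases eq_or_ne (ev σ'' θ) 1 with h1 | h1
        · have hiter : ∀ k, ev σ'' (iterImp θ (chain L' χ (m-1)) k)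
              = ev σ'' (chain L' χ (m-1)) := by
            intro k
            induction k with
            | zero => rfl
            | succ k ihk =>
              show ev σ'' (.imp θ _) = _
              rw [ev_imp hm, h1, ihk]
              exact limp_one_left hb0.2
          rw [hiter]
          exact ih (fun hall => hK (by
            intro ρ hρ
            rcases List.mem_cons.1 hρ with rfl | hρ'
            · exact h1
            · exact hall ρ hρ'))
        · have hθle : ev σ'' θ ≤ 1 - 1/((m:ℝ)-1) := by
            have hmem : ev σ'' θ ∈ Tset m := tv_mem _
            obtain ⟨k, hk⟩ := hmem
            have hklt : k.1 < m - 1 := by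
              by_contra hge
              have hkk : k.1 = m - 1 := by have := k.isLt; omega
              exact h1 (by rw [hk, show k = ⟨m-1, by omega⟩ from Fin.ext hkk]; exact tv_last hm)
            rw [hk]
            show (k.1:ℝ)/((m:ℝ)-1) ≤ _
            have hM := em1 (m := m) hm
            rw [div_le_iff₀ hM]
            have h2 : (k.1:ℝ) ≤ ((m:ℝ)-1) - 1 := by
              have h2a : (k.1:ℝ) ≤ ((m-2:ℕ):ℝ) := by exact_mod_cast (by omega : k.1 ≤ m - 2)
              rw [show ((m-2:ℕ):ℝ) = (m:ℝ)-2 by push_cast [hm]; ring] at h2a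
              linarith
            calc (k.1:ℝ) ≤ ((m:ℝ)-1) - 1 := h2
            _ = (1 - 1/((m:ℝ)-1)) * ((m:ℝ)-1) := by field_simp
          have key : ∀ k : ℕ, min 1 ((k:ℝ)/((m:ℝ)-1) + ev σ'' (chain L' χ (m-1)))
                ≤ ev σ'' (iterImp θ (chain L' χ (m-1)) k) ∧
                ev σ'' (iterImp θ (chain L' χ (m-1)) k) ≤ 1 := by
            intro k
            induction k with
            | zero =>
              constructor
              · simp only [Nat.cast_zero, zero_div, zero_add, iterImp]
                exact min_le_right _ _
              · exact hb0.2
            | succ k ihk =>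
              have hM := em1 (m := m) hm
              have hc1 : (0:ℝ) < 1/((m:ℝ)-1) := by positivity
              constructor
              · show _ ≤ ev σ'' (.imp θ _)
                rw [ev_imp hm]
                unfold limp
                apply le_min (min_le_left _ _)
                have h3 : 1/((m:ℝ)-1) ≤ 1 - ev σ'' θ := by linarith
                have h4 := ihk.1
                have hcast : ((k+1:ℕ):ℝ)/((m:ℝ)-1) = (k:ℝ)/((m:ℝ)-1) + 1/((m:ℝ)-1) := by
                  push_cast; ring
                rcases le_total 1 ((k:ℝ)/((m:ℝ)-1) + ev σ'' (chain L' χ (m-1))) with hcs | hcs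
                · rw [min_eq_left hcs] at h4
                  calc min 1 (((k+1:ℕ):ℝ)/((m:ℝ)-1) + ev σ'' (chain L' χ (m-1))) ≤ 1 :=
                        min_le_left _ _
                    _ ≤ 1 - ev σ'' θ + ev σ'' (iterImp θ (chain L' χ (m-1)) k) := by linarith
                · rw [min_eq_right hcs] at h4
                  calc min 1 (((k+1:ℕ):ℝ)/((m:ℝ)-1) + ev σ'' (chain L' χ (m-1)))
                        ≤ ((k+1:ℕ):ℝ)/((m:ℝ)-1) + ev σ'' (chain L' χ (m-1)) := min_le_right _ _
                    _ ≤ 1 - ev σ'' θ + ev σ'' (iterImp θ (chain L' χ (m-1)) k) := by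
                        rw [hcast]; linarith
              · show ev σ'' (.imp θ _) ≤ 1
                rw [ev_imp hm]
                exact limp_le_one _ _
          have hfin := (key (m-1)).1
          have h5 : ((m-1:ℕ):ℝ)/((m:ℝ)-1) = 1 := by
            rw [natcast_sub_one hm, div_self (em1 hm).ne']
          rw [h5] at hfin
          have h6 : min 1 (1 + ev σ'' (chain L' χ (m-1))) = 1 :=
            min_eq_left (by linarith [hb0.1])
          rw [h6] at hfin
          exact le_antisymm (key (m-1)).2 hfin
    exact main L hKχ
  -- conclude
  have hthmchain : Thm m I (chain L χ (m-1)) := by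
    have := Thm.taut (m := m) (I := I) _ sigF htaut
    rwa [subst_abst] at this
  exact thm_chain L χ (m-1) hthmchain hLthm

end Compactness
section FMP
variable {m : ℕ} {I : Fin m → Formula → Formula}

/-- Subformula closure. -/
def sub : Formula → Finset Formula
  | .var n => {.var n}
  | .neg a => insert (.neg a) (sub a)
  | .imp a b => insert (.imp a b) (sub a ∪ sub b)
  | .cond a b => insert (.cond a b) (sub a ∪ sub b)

lemma self_mem_sub (F : Formula) : F ∈ sub F := by
  cases F <;> simp [sub]

lemma sub_trans : ∀ F χ : Formula, χ ∈ sub F → sub χ ⊆ sub F := by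
  intro F
  induction F with
  | var n =>
    intro χ hχ
    simp only [sub, Finset.mem_singleton] at hχ
    subst hχ; exact subset_rfl
  | neg a ih =>
    intro χ hχ
    simp only [sub, Finset.mem_insert] at hχ
    rcases hχ with rfl | hχ
    · exact subset_rfl
    · exact (ih χ hχ).trans (Finset.subset_insert _ _)
  | imp a b ih1 ih2 =>
    intro χ hχ
    simp only [sub, Finset.mem_insert, Finset.mem_union] at hχ
    rcases hχ with rfl | hχ | hχ
    · exact subset_rfl
    · exact (ih1 χ hχ).trans ((Finset.subset_union_left).trans (Finset.subset_insert _ _))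
    · exact (ih2 χ hχ).trans ((Finset.subset_union_right).trans (Finset.subset_insert _ _))
  | cond a b ih1 ih2 =>
    intro χ hχ
    simp only [sub, Finset.mem_insert, Finset.mem_union] at hχ
    rcases hχ with rfl | hχ | hχ
    · exact subset_rfl
    · exact (ih1 χ hχ).trans ((Finset.subset_union_left).trans (Finset.subset_insert _ _))
    · exact (ih2 χ hχ).trans ((Finset.subset_union_right).trans (Finset.subset_insert _ _))

lemma mem_sub_of_neg {F a : Formula} (h : Formula.neg a ∈ sub F) : a ∈ sub F :=
  sub_trans F _ h (by simp [sub, self_mem_sub])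

lemma mem_sub_of_imp_left {F a b : Formula} (h : Formula.imp a b ∈ sub F) : a ∈ sub F :=
  sub_trans F _ h (by simp [sub]; right; left; exact self_mem_sub a)

lemma mem_sub_of_imp_right {F a b : Formula} (h : Formula.imp a b ∈ sub F) : b ∈ sub F :=
  sub_trans F _ h (by simp [sub]; right; right; exact self_mem_sub b)

lemma mem_sub_of_cond_left {F a b : Formula} (h : Formula.cond a b ∈ sub F) : a ∈ sub F :=
  sub_trans F _ h (by simp [sub]; right; left; exact self_mem_sub a)

lemma mem_sub_of_cond_right {F a b : Formula} (h : Formula.cond a b ∈ sub F) : b ∈ sub F :=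
  sub_trans F _ h (by simp [sub]; right; right; exact self_mem_sub b)

lemma revIdx_revIdx {k : Fin m} : revIdx (revIdx k) = k := by
  apply Fin.ext
  show m - 1 - (m - 1 - k.1) = k.1
  have := k.isLt; omega

open Classical in
/-- value-index extraction -/
noncomputable def tidx (hm : 2 ≤ m) (a : ℝ) : Fin m :=
  if h : ∃ k : Fin m, a = tv m k then h.choose else ⟨0, by omega⟩

lemma tidx_spec (hm : 2 ≤ m) {a : ℝ} (h : a ∈ Tset m) : tv m (tidx hm a) = a := by
  unfold tidx
  rw [dif_pos (mem_tset_iff.1 h)]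
  exact ((mem_tset_iff.1 h).choose_spec).symm

/-- Projection of a world to its finite trace on Sg. -/
noncomputable def projW (hm : 2 ≤ m) (Sg : Finset Formula) (u : Wld m I) :
    Formula → Fin m :=
  fun χ => if χ ∈ Sg then tidx hm (u.w χ) else ⟨0, by omega⟩

lemma projW_spec (hm : 2 ≤ m) (Sg : Finset Formula) (u : Wld m I) {χ : Formula}
    (h : χ ∈ Sg) : tv m (projW hm Sg u χ) = u.w χ := by
  rw [projW, if_pos h]
  exact tidx_spec hm (u.mem χ)

/-- The finite set of worlds. -/
def WT (hm : 2 ≤ m) (I : Fin m → Formula → Formula) (Sg : Finset Formula) : Type :=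
  {g : Formula → Fin m // ∃ u : Wld m I, g = projW hm Sg u}

instance WT_finite (hm : 2 ≤ m) (Sg : Finset Formula) : Finite (WT hm I Sg) := by
  have : Finite ({x // x ∈ Sg} → Fin m) := by infer_instance
  apply Finite.of_injective (fun g : WT hm I Sg => (fun χ : {x // x ∈ Sg} => g.1 χ.1))
  intro g1 g2 hgg
  apply Subtype.ext
  funext χ
  by_cases hχ : χ ∈ Sg
  · exact congrFun hgg ⟨χ, hχ⟩
  · obtain ⟨u1, hu1⟩ := g1.2
    obtain ⟨u2, hu2⟩ := g2.2
    rw [hu1, hu2, projW, if_neg hχ, projW, if_neg hχ]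

open Classical in
/-- Canonical pairs for a level-set tuple X. -/
noncomputable def pairsF (hm : 2 ≤ m) (I : Fin m → Formula → Formula) (Sg : Finset Formula)
    (X : Fin m → Set (WT hm I Sg)) : Finset (Formula × Formula) :=
  (Sg ×ˢ Sg).filter (fun p => Formula.cond p.1 p.2 ∈ Sg ∧
    ∀ i : Fin m, X i = {g : WT hm I Sg | g.1 p.1 = i})

open Classical in
/-- The finite canonical model. -/
noncomputable def FM (hm : 2 ≤ m) (I : Fin m → Formula → Formula) (Sg : Finset Formula)
    (u0 : Wld m I) : Model m (WT hm I Sg) where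
  ne := ⟨⟨projW hm Sg u0, u0, rfl⟩⟩
  v := fun p g => tv m (g.1 (.var p))
  v_mem := fun p g => tv_mem _
  R := fun X g g' =>
    if h : (pairsF hm I Sg X).Nonempty then
      (pairsF hm I Sg X).inf' h
        (fun p => limp (tv m (g.1 (.cond p.1 p.2))) (tv m (g'.1 p.2)))
    else 1
  R_mem := by
    intro X g g'
    by_cases h : (pairsF hm I Sg X).Nonempty
    · rw [dif_pos h]
      apply Finset.inf'_mem (Tset m) (fun x hx y hy => min_mem_tset hx hy)
      intro p hp
      exact limp_mem_tset hm (tv_mem _) (tv_mem _)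
    · rw [dif_neg h]
      exact one_mem_tset hm

end FMP
section Truth
variable {m : ℕ} {I : Fin m → Formula → Formula}

/-- provably-true base formula -/
def baseF : Formula := .imp (.var 0) (.var 0)

lemma Wld.base_one (hm : 2 ≤ m) (v : Wld m I) : v.w baseF = 1 := by
  rw [baseF, v.imp_one_iff]

lemma Wld.cond_base_one (v : Wld m I) (α : Formula) : v.w (.cond α baseF) = 1 :=
  v.hthm _ (Thm.a3 α 0)

lemma Wld.I_val_01 (hm : 2 ≤ m) (v : Wld m I) (hI : IsIFamily m I) (a : Fin m)
    (χ : Formula) : v.w (I a χ) = 0 ∨ v.w (I a χ) = 1 := by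
  rw [v.I_val hI]
  by_cases hc : tv m a ≤ v.w χ
  · right; rw [if_pos hc]
  · left; rw [if_neg hc]

lemma Wld.I_val_one_iff (hm : 2 ≤ m) (v : Wld m I) (hI : IsIFamily m I) (a : Fin m)
    (χ : Formula) : v.w (I a χ) = 1 ↔ tv m a ≤ v.w χ := by
  rw [v.I_val hI]
  constructor
  · intro h
    by_contra hc
    rw [if_neg hc] at h
    norm_num at h
  · intro h
    rw [if_pos h]

lemma Wld.cond_and_val (hm : 2 ≤ m) (v : Wld m I) (α A B : Formula) :
    v.w (.cond α (Formula.and A B)) = min (v.w (.cond α A)) (v.w (.cond α B)) := by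
  have h1 := v.hthm _ (Thm.a1 α A B)
  have h2 := v.hthm _ (Thm.a2 α A B)
  rw [v.imp_one_iff] at h1 h2
  rw [v.and_val hm] at h1 h2
  exact le_antisymm h1 h2

lemma foldr_and_le (hm : 2 ≤ m) (v : Wld m I) (L : List Formula) (ρ : Formula)
    (hρ : ρ ∈ L) : v.w (L.foldr Formula.and baseF) ≤ v.w ρ := by
  induction L with
  | nil => cases hρ
  | cons θ L ih =>
    show v.w (Formula.and θ (L.foldr Formula.and baseF)) ≤ _
    rw [v.and_val hm]
    rcases List.mem_cons.1 hρ with rfl | hρ'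
    · exact min_le_left _ _
    · exact le_trans (min_le_right _ _) (ih hρ')

lemma cond_foldr_ge (hm : 2 ≤ m) (v : Wld m I) (α : Formula) (L : List Formula)
    {t : ℝ} (ht1 : t ≤ 1) (h : ∀ ρ ∈ L, t ≤ v.w (.cond α ρ)) :
    t ≤ v.w (.cond α (L.foldr Formula.and baseF)) := by
  induction L with
  | nil =>
    show t ≤ v.w (.cond α baseF)
    rw [v.cond_base_one]
    exact ht1
  | cons θ L ih =>
    show t ≤ v.w (.cond α (Formula.and θ (L.foldr Formula.and baseF)))
    rw [v.cond_and_val hm]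
    exact le_min (h θ (by simp)) (ih (fun ρ hρ => h ρ (by simp [hρ])))

lemma truth_cond (hm : 2 ≤ m) (hI : IsIFamily m I) (Sg : Finset Formula)
    (u0 : Wld m I) (α β : Formula)
    (hmem : Formula.cond α β ∈ Sg) (hα : α ∈ Sg) (hβ : β ∈ Sg)
    (ih1 : ∀ g : WT hm I Sg, (FM hm I Sg u0).val α g = tv m (g.1 α))
    (ih2 : ∀ g : WT hm I Sg, (FM hm I Sg u0).val β g = tv m (g.1 β)) :
    ∀ g : WT hm I Sg, (FM hm I Sg u0).val (.cond α β) g = tv m (g.1 (.cond α β)) := by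
  classical
  intro g
  obtain ⟨x, hx⟩ := g.2
  set M := FM hm I Sg u0 with hM
  show sInf (Set.range fun y : WT hm I Sg =>
      limp (M.R (fun i => {z : WT hm I Sg | M.val α z = tv m i}) g y) (M.val β y))
    = tv m (g.1 (.cond α β))
  have hXeq : (fun i => {z : WT hm I Sg | M.val α z = tv m i})
      = (fun i => {z : WT hm I Sg | z.1 α = i}) := by
    funext i; ext z
    simp only [Set.mem_setOf_eq]
    rw [ih1 z]
    constructor
    · intro hz; exact tv_inj hm hz
    · intro hz; rw [hz]
  rw [hXeq]
  set Xc := (fun i => {z : WT hm I Sg | z.1 α = i}) with hXc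
  have hpmem : (α, β) ∈ pairsF hm I Sg Xc := by
    refine Finset.mem_filter.2 ⟨Finset.mem_product.2 ⟨hα, hβ⟩, hmem, fun i => rfl⟩
  have hne : (pairsF hm I Sg Xc).Nonempty := ⟨_, hpmem⟩
  have hRdef : ∀ y : WT hm I Sg, M.R Xc g y =
      (pairsF hm I Sg Xc).inf' hne
        (fun p => limp (tv m (g.1 (.cond p.1 p.2))) (tv m (y.1 p.2))) := by
    intro y
    show (if h : (pairsF hm I Sg Xc).Nonempty then
        (pairsF hm I Sg Xc).inf' h
          (fun p => limp (tv m (g.1 (.cond p.1 p.2))) (tv m (y.1 p.2)))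
      else 1) = _
    rw [dif_pos hne]
  have hgc : tv m (g.1 (.cond α β)) = x.w (.cond α β) := by
    rw [hx]; exact projW_spec hm Sg x hmem
  have hpair : ∀ p ∈ pairsF hm I Sg Xc, ∀ v : Wld m I,
      v.w (.cond α p.2) = v.w (.cond p.1 p.2) := by
    intro p hp v
    have hpf := Finset.mem_filter.1 hp
    have hp1Sg : p.1 ∈ Sg := (Finset.mem_product.1 hpf.1).1
    have heq : ∀ u : Wld m I, u.w α = u.w p.1 := by
      intro u
      have h1 : (⟨projW hm Sg u, u, rfl⟩ : WT hm I Sg) ∈ Xc (projW hm Sg u α) := rfl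
      rw [hpf.2.2] at h1
      have h2 : projW hm Sg u p.1 = projW hm Sg u α := h1
      have h3 := congrArg (tv m) h2
      rwa [projW_spec hm Sg u hp1Sg, projW_spec hm Sg u hα, eq_comm] at h3
    have hiff : Thm m I (Formula.iff α p.1) :=
      comp hm _ (fun v' => (v'.iff_one_iff hm α p.1).2 (heq v'))
    exact (v.iff_one_iff hm _ _).1 (v.hthm _ (Thm.rcea α p.1 p.2 hiff))
  apply le_antisymm
  · -- hard direction: sInf ≤ value
    by_contra hlt
    push_neg at hlt
    have hbdd : BddBelow (Set.range fun y : WT hm I Sg =>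
        limp (M.R Xc g y) (M.val β y)) := (Set.finite_range _).bddBelow
    have hterm_gt : ∀ y : WT hm I Sg,
        tv m (g.1 (.cond α β)) < limp (M.R Xc g y) (M.val β y) :=
      fun y => lt_of_lt_of_le hlt (csInf_le hbdd (Set.mem_range_self y))
    by_cases htop : (g.1 (.cond α β)).1 = m - 1
    · have hc1 : tv m (g.1 (.cond α β)) = 1 := (tv_eq_one_iff hm).2 htop
      have hgg := hterm_gt g
      rw [hc1] at hgg
      exact absurd (limp_le_one (M.R Xc g g) (M.val β g)) (not_le.2 hgg)
    · have hk1 : (g.1 (.cond α β)).1 + 1 < m := by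
        have := (g.1 (.cond α β)).isLt; omega
      set a : Fin m := ⟨(g.1 (.cond α β)).1 + 1, hk1⟩ with ha
      have hterm_a : ∀ y : WT hm I Sg, tv m a ≤ limp (M.R Xc g y) (M.val β y) := by
        intro y
        have hmemt : limp (M.R Xc g y) (M.val β y) ∈ Tset m :=
          limp_mem_tset hm (M.R_mem Xc g y) (by rw [ih2 y]; exact tv_mem _)
        exact tset_succ hm hmemt (hterm_gt y) hk1
      set clsL : Fin m → List Formula := fun j =>
        (((pairsF hm I Sg Xc).filter
          (fun p => x.w (.cond p.1 p.2) = tv m (revIdx j))).toList.map Prod.snd)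
        with hcls
      set γCl : Fin m → Formula := fun j => (clsL j).foldr Formula.and baseF with hγ
      have hants : ∀ j, tv m (revIdx j) ≤ x.w (.cond α (γCl j)) := by
        intro j
        apply cond_foldr_ge hm x α _ (tv_le_one hm _)
        intro ρ hρ
        simp only [hcls, List.mem_map] at hρ
        obtain ⟨p, hpmem', rfl⟩ := hρ
        rw [Finset.mem_toList, Finset.mem_filter] at hpmem'
        rw [hpair p hpmem'.1 x, hpmem'.2]
      have hH : ∀ b : Fin m, Thm m I
          (nestImp m (fun j => I (odotIdx (revIdx j) b) (γCl j)) (I (odotIdx a b) β)) := by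
        intro b
        apply comp hm
        intro v
        rw [v.nestImp_one_iff hm m _ _ (fun j => v.I_val_01 hm hI _ _)]
        intro hall
        rw [v.I_val_one_iff hm hI]
        have hallv : ∀ j, tv m (odotIdx (revIdx j) b) ≤ v.w (γCl j) :=
          fun j => (v.I_val_one_iff hm hI _ _).1 (hall j)
        have hrv : tv m b ≤ M.R Xc g ⟨projW hm Sg v, v, rfl⟩ := by
          rw [hRdef ⟨projW hm Sg v, v, rfl⟩]
          apply Finset.le_inf'
          intro p hp
          have hpf := Finset.mem_filter.1 hp
          have hp2Sg : p.2 ∈ Sg := (Finset.mem_product.1 hpf.1).2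
          obtain ⟨kp, hkp⟩ := mem_tset_iff.1 (x.mem (.cond p.1 p.2))
          have hpin : p.2 ∈ clsL (revIdx kp) := by
            simp only [hcls, List.mem_map]
            exact ⟨p, Finset.mem_toList.2 (Finset.mem_filter.2
              ⟨hp, by rw [hkp, revIdx_revIdx]⟩), rfl⟩
          have h1 : v.w (γCl (revIdx kp)) ≤ v.w p.2 := foldr_and_le hm v _ _ hpin
          have h2 := hallv (revIdx kp)
          rw [revIdx_revIdx] at h2
          have h3 : lodot (x.w (.cond p.1 p.2)) (tv m b) ≤ v.w p.2 := by
            rw [hkp, tv_lodot hm]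
            exact le_trans h2 h1
          have hg1 : tv m (g.1 (.cond p.1 p.2)) = x.w (.cond p.1 p.2) := by
            rw [hx]; exact projW_spec hm Sg x hpf.2.1
          show tv m b ≤ limp (tv m (g.1 (.cond p.1 p.2)))
            (tv m (projW hm Sg v p.2))
          rw [hg1, projW_spec hm Sg v hp2Sg]
          exact le_limp_of_lodot (tv_le_one hm b) h3
        have h4 := hterm_a ⟨projW hm Sg v, v, rfl⟩
        rw [ih2 ⟨projW hm Sg v, v, rfl⟩] at h4
        have hgvβ : tv m ((⟨projW hm Sg v, v, rfl⟩ : WT hm I Sg).1 β) = v.w β :=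
          projW_spec hm Sg v hβ
        rw [hgvβ] at h4
        have h5 := limp_ge_imp h4
        rw [← tv_lodot hm]
        unfold lodot
        apply max_le (v.nonneg hm β)
        linarith
      have hconc := Thm.ra a α γCl β hH
      have hxc1 := x.hthm _ hconc
      rw [x.nestImp_one_iff hm m _ _ (fun j => x.I_val_01 hm hI _ _)] at hxc1
      have h7 := hxc1 (fun j => (x.I_val_one_iff hm hI _ _).2 (hants j))
      have h8 : tv m a ≤ x.w (.cond α β) := (x.I_val_one_iff hm hI _ _).1 h7
      rw [← hgc] at h8
      have h9 := (tv_le_tv hm).1 h8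
      simp only [ha] at h9
      omega
  · -- easy direction
    apply le_csInf ⟨_, Set.mem_range_self g⟩
    rintro b ⟨y, rfl⟩
    show tv m (g.1 (.cond α β)) ≤ limp
      (M.R (fun i => {z : WT hm I Sg | z.1 α = i}) g y) (M.val β y)
    rw [hRdef y]
    have h1 : (pairsF hm I Sg Xc).inf' hne
        (fun p => limp (tv m (g.1 (.cond p.1 p.2))) (tv m (y.1 p.2)))
        ≤ limp (tv m (g.1 (.cond α β))) (tv m (y.1 β)) :=
      Finset.inf'_le _ hpmem
    calc tv m (g.1 (.cond α β))
        ≤ limp (limp (tv m (g.1 (.cond α β))) (tv m (y.1 β))) (tv m (y.1 β)) :=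
          limp_limp_ge (tv_le_one hm _)
      _ ≤ limp ((pairsF hm I Sg Xc).inf'
            hne (fun p => limp (tv m (g.1 (.cond p.1 p.2))) (tv m (y.1 p.2))))
          (tv m (y.1 β)) := limp_anti h1
      _ = limp ((pairsF hm I Sg Xc).inf'
            hne (fun p => limp (tv m (g.1 (.cond p.1 p.2))) (tv m (y.1 p.2))))
          (M.val β y) := by rw [ih2 y]

lemma truth (hm : 2 ≤ m) (hI : IsIFamily m I) (φ0 : Formula) (u0 : Wld m I) :
    ∀ χ, χ ∈ sub φ0 → ∀ g : WT hm I (sub φ0),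
      (FM hm I (sub φ0) u0).val χ g = tv m (g.1 χ) := by
  intro χ
  induction χ with
  | var p => intro _ g; rfl
  | neg a ih =>
    intro hmem g
    obtain ⟨u, hu⟩ := g.2
    have ha := mem_sub_of_neg hmem
    show lneg ((FM hm I (sub φ0) u0).val a g) = _
    rw [ih ha g, hu, projW_spec hm _ u hmem, projW_spec hm _ u ha]
    exact (u.hneg a).symm
  | imp a b ih1 ih2 =>
    intro hmem g
    obtain ⟨u, hu⟩ := g.2
    have ha := mem_sub_of_imp_left hmem
    have hb := mem_sub_of_imp_right hmem
    show limp ((FM hm I (sub φ0) u0).val a g) ((FM hm I (sub φ0) u0).val b g) = _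
    rw [ih1 ha g, ih2 hb g, hu, projW_spec hm _ u hmem, projW_spec hm _ u ha,
      projW_spec hm _ u hb]
    exact (u.himp a b).symm
  | cond α β ih1 ih2 =>
    intro hmem g
    exact truth_cond hm hI (sub φ0) u0 α β hmem
      (mem_sub_of_cond_left hmem) (mem_sub_of_cond_right hmem)
      (fun g' => ih1 (mem_sub_of_cond_left hmem) g')
      (fun g' => ih2 (mem_sub_of_cond_right hmem) g') g

end Truth
/-- Finite Model Property: if φ is not a theorem of LCR then there is a
finite Kripke LCR model with a world where φ does not take value 1. -/
theorem finite_model_property (m : ℕ) (hm : 2 ≤ m)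
    (I : Fin m → Formula → Formula) (hI : IsIFamily m I)
    (φ : Formula) (h : ¬ Thm m I φ) :
    ∃ (W : Type) (_ : Finite W) (M : Model m W) (x : W), M.val φ x ≠ 1 := by
  have hex : ∃ u0 : Wld m I, u0.w φ ≠ 1 := by
    by_contra hno
    push_neg at hno
    exact h (comp hm φ (fun u => hno u))
  obtain ⟨u0, hu0⟩ := hex
  refine ⟨WT hm I (sub φ), WT_finite hm (sub φ), FM hm I (sub φ) u0,
    ⟨projW hm (sub φ) u0, u0, rfl⟩, ?_⟩
  refine (truth hm hI φ u0 φ (self_mem_sub φ) _).trans_ne ?_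
  show tv m (projW hm (sub φ) u0 φ) ≠ 1
  rw [projW_spec hm (sub φ) u0 (self_mem_sub φ)]
  exact hu0

end LCR
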